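/- Let q be a nonzero real number. Then there exists a unique star structure ★ₖ on SL_q(2,ℂ) with a^{★ₖ} = d, b^{★ₖ} = qc, c^{★ₖ} = q⁻¹b, d^{★ₖ} = a, and it is a Hopf star structure: Δ(x^{★ₖ}) = (★ₖ ⊗ ★ₖ)(Δ(x)) for all x, where Δ is the matrix comultiplication. (This real form is the quantum group SU_q(1,1).) -/
import Mathlib


noncomputable section

open FreeAlgebra
open scoped TensorProduct

/-- The Manin relations with parameter `q` together with the determinant relation
`a d − q⁻¹ b c = 1`. -/
inductive SLRel (q : ℂ) : FreeAlgebra ℂ (Fin 4) → FreeAlgebra ℂ (Fin 4) → Prop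
  | ab : SLRel q (ι ℂ 0 * ι ℂ 1) (q⁻¹ • (ι ℂ 1 * ι ℂ 0))
  | ac : SLRel q (ι ℂ 0 * ι ℂ 2) (q⁻¹ • (ι ℂ 2 * ι ℂ 0))
  | bd : SLRel q (ι ℂ 1 * ι ℂ 3) (q⁻¹ • (ι ℂ 3 * ι ℂ 1))
  | cd : SLRel q (ι ℂ 2 * ι ℂ 3) (q⁻¹ • (ι ℂ 3 * ι ℂ 2))
  | bc : SLRel q (ι ℂ 1 * ι ℂ 2) (ι ℂ 2 * ι ℂ 1)
  | ad : SLRel q (ι ℂ 0 * ι ℂ 3 - ι ℂ 3 * ι ℂ 0) ((q⁻¹ - q) • (ι ℂ 1 * ι ℂ 2))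
  | det : SLRel q (ι ℂ 0 * ι ℂ 3 - q⁻¹ • (ι ℂ 1 * ι ℂ 2)) 1

/-- `SL_q(2,ℂ)`. -/
abbrev SLq (q : ℂ) := RingQuot (SLRel q)

/-- The images of the generators `a, b, c, d` in `SL_q(2,ℂ)`. -/
def gen (q : ℂ) (i : Fin 4) : SLq q := RingQuot.mkAlgHom ℂ (SLRel q) (ι ℂ i)

/-- A star structure on a complex algebra: additive, conjugate-linear,
antimultiplicative, unital, involutive. -/
def IsStar {A : Type*} [Ring A] [Algebra ℂ A] (st : A → A) : Prop :=
  (∀ x y : A, st (x + y) = st x + st y) ∧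
  (∀ (z : ℂ) (x : A), st (z • x) = (starRingEnd ℂ) z • st x) ∧
  (∀ x y : A, st (x * y) = st y * st x) ∧
  st 1 = 1 ∧
  (∀ x : A, st (st x) = x)

/-- `Δ` is the matrix comultiplication of `SL_q(2,ℂ)`. -/
def IsComul (q : ℂ) (Δ : SLq q →ₐ[ℂ] (SLq q ⊗[ℂ] SLq q)) : Prop :=
  Δ (gen q 0) = gen q 0 ⊗ₜ[ℂ] gen q 0 + gen q 1 ⊗ₜ[ℂ] gen q 2 ∧
  Δ (gen q 1) = gen q 0 ⊗ₜ[ℂ] gen q 1 + gen q 1 ⊗ₜ[ℂ] gen q 3 ∧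
  Δ (gen q 2) = gen q 2 ⊗ₜ[ℂ] gen q 0 + gen q 3 ⊗ₜ[ℂ] gen q 2 ∧
  Δ (gen q 3) = gen q 2 ⊗ₜ[ℂ] gen q 1 + gen q 3 ⊗ₜ[ℂ] gen q 3

/-- The prescribed values of the star structure on the generators. -/
def StarVals (q : ℂ) (st : SLq q → SLq q) : Prop :=
  st (gen q 0) = gen q 3 ∧ st (gen q 1) = (q : ℂ) • gen q 2 ∧
  st (gen q 2) = (q⁻¹ : ℂ) • gen q 1 ∧ st (gen q 3) = gen q 0

open MulOpposite

namespace SU11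

variable (q : ℝ)

/-- target values of the star map on the generators, inside the free algebra. -/
def fv : Fin 4 → FreeAlgebra ℂ (Fin 4) :=
  ![ι ℂ 3, ((q : ℂ)) • ι ℂ 2, ((q : ℂ))⁻¹ • ι ℂ 1, ι ℂ 0]

/-- the conjugation of scalars, followed by the inclusion into `SLq`. -/
def cj : ℂ →+* SLq ((q : ℂ)) :=
  (algebraMap ℂ (SLq ((q : ℂ)))).comp (starRingEnd ℂ)

def genMon : FreeMonoid (Fin 4) →* SLq ((q : ℂ)) :=
  FreeMonoid.lift fun i => RingQuot.mkAlgHom ℂ (SLRel ((q : ℂ))) (fv q i)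

/-- the conjugate-linear algebra morphism determined by `fv`. -/
def g : FreeAlgebra ℂ (Fin 4) →+* SLq ((q : ℂ)) :=
  (MonoidAlgebra.liftNCRingHom (cj q) (genMon q) fun z x => Algebra.commutes ((starRingEnd ℂ) z) ((genMon q) x)).comp
    (equivMonoidAlgebraFreeMonoid (R := ℂ) (X := Fin 4)).toAlgHom.toRingHom

lemma g_ι (i : Fin 4) : g q (ι ℂ i) = RingQuot.mkAlgHom ℂ (SLRel ((q : ℂ))) (fv q i) := by
  simp [g, equivMonoidAlgebraFreeMonoid, MonoidAlgebra.liftNCRingHom,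
    MonoidAlgebra.of_apply, MonoidAlgebra.liftNC_single, genMon, cj]

lemma g_alg (z : ℂ) :
    g q (algebraMap ℂ _ z) = algebraMap ℂ (SLq ((q : ℂ))) ((starRingEnd ℂ) z) := by
  simp [g, MonoidAlgebra.liftNCRingHom, cj]

end SU11

namespace SU11x
open SU11

variable (q : ℝ)

lemma g_smul (z : ℂ) (x : FreeAlgebra ℂ (Fin 4)) :
    g q (z • x) = (starRingEnd ℂ) z • g q x := by
  rw [Algebra.smul_def, map_mul, g_alg, ← Algebra.smul_def]

lemma star_csmul (z : ℂ) (x : FreeAlgebra ℂ (Fin 4)) : star (z • x) = z • star x := by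
  rw [Algebra.smul_def, star_mul, star_algebraMap, ← Algebra.commutes, ← Algebra.smul_def]

def Fop : FreeAlgebra ℂ (Fin 4) →+* (SLq ((q : ℂ)))ᵐᵒᵖ :=
  (RingHom.op (g q)).comp
    (starRingEquiv : FreeAlgebra ℂ (Fin 4) ≃+* (FreeAlgebra ℂ (Fin 4))ᵐᵒᵖ).toRingHom

lemma Fop_apply (x : FreeAlgebra ℂ (Fin 4)) : Fop q x = op (g q (star x)) := rfl

-- raw relations in SLq
section rels
local notation "π" => RingQuot.mkAlgHom ℂ (SLRel ((q : ℂ)))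

lemma rab' : π (ι ℂ 0) * π (ι ℂ 1) = ((q : ℂ))⁻¹ • (π (ι ℂ 1) * π (ι ℂ 0)) := by
  have := RingQuot.mkAlgHom_rel ℂ (SLRel.ab (q := (q : ℂ)))
  simpa [map_mul, map_smul] using this

lemma rac' : π (ι ℂ 0) * π (ι ℂ 2) = ((q : ℂ))⁻¹ • (π (ι ℂ 2) * π (ι ℂ 0)) := by
  have := RingQuot.mkAlgHom_rel ℂ (SLRel.ac (q := (q : ℂ)))
  simpa [map_mul, map_smul] using this

lemma rbd' : π (ι ℂ 1) * π (ι ℂ 3) = ((q : ℂ))⁻¹ • (π (ι ℂ 3) * π (ι ℂ 1)) := by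
  have := RingQuot.mkAlgHom_rel ℂ (SLRel.bd (q := (q : ℂ)))
  simpa [map_mul, map_smul] using this

lemma rcd' : π (ι ℂ 2) * π (ι ℂ 3) = ((q : ℂ))⁻¹ • (π (ι ℂ 3) * π (ι ℂ 2)) := by
  have := RingQuot.mkAlgHom_rel ℂ (SLRel.cd (q := (q : ℂ)))
  simpa [map_mul, map_smul] using this

lemma rbc' : π (ι ℂ 1) * π (ι ℂ 2) = π (ι ℂ 2) * π (ι ℂ 1) := by
  have := RingQuot.mkAlgHom_rel ℂ (SLRel.bc (q := (q : ℂ)))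
  simpa [map_mul] using this

lemma rad' : π (ι ℂ 0) * π (ι ℂ 3) - π (ι ℂ 3) * π (ι ℂ 0)
    = (((q : ℂ))⁻¹ - (q : ℂ)) • (π (ι ℂ 1) * π (ι ℂ 2)) := by
  have := RingQuot.mkAlgHom_rel ℂ (SLRel.ad (q := (q : ℂ)))
  simpa [map_mul, map_sub, map_smul] using this

lemma rdet' : π (ι ℂ 0) * π (ι ℂ 3) - ((q : ℂ))⁻¹ • (π (ι ℂ 1) * π (ι ℂ 2)) = 1 := by
  have := RingQuot.mkAlgHom_rel ℂ (SLRel.det (q := (q : ℂ)))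
  simpa [map_mul, map_sub, map_smul] using this

end rels

lemma hrel (hq : q ≠ 0) : ∀ ⦃x y⦄, SLRel ((q : ℂ)) x y → Fop q x = Fop q y := by
  have hQ : ((q : ℂ)) ≠ 0 := by exact_mod_cast hq
  intro x y h
  rw [Fop_apply, Fop_apply]
  congr 1
  induction h with
  | ab =>
      simp only [star_mul, star_csmul, FreeAlgebra.star_ι, map_mul, map_smul, g_smul, g_ι,
        map_inv₀, Complex.conj_ofReal, fv, Matrix.cons_val_zero, Matrix.cons_val_one,
        Matrix.head_cons, Matrix.cons_val_two, Matrix.tail_cons, Matrix.cons_val_three]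
      rw [smul_mul_assoc, rcd' q, mul_smul_comm]
      all_goals match_scalars <;> ring
  | ac =>
      simp only [star_mul, star_csmul, FreeAlgebra.star_ι, map_mul, map_smul, g_smul, g_ι,
        map_inv₀, Complex.conj_ofReal, fv, Matrix.cons_val_zero, Matrix.cons_val_one,
        Matrix.head_cons, Matrix.cons_val_two, Matrix.tail_cons, Matrix.cons_val_three]
      rw [smul_mul_assoc, rbd' q, mul_smul_comm]
      all_goals match_scalars <;> ring
  | bd =>
      simp only [star_mul, star_csmul, FreeAlgebra.star_ι, map_mul, map_smul, g_smul, g_ι,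
        map_inv₀, Complex.conj_ofReal, fv, Matrix.cons_val_zero, Matrix.cons_val_one,
        Matrix.head_cons, Matrix.cons_val_two, Matrix.tail_cons, Matrix.cons_val_three]
      rw [mul_smul_comm, rac' q, smul_mul_assoc]
      all_goals match_scalars <;> ring
  | cd =>
      simp only [star_mul, star_csmul, FreeAlgebra.star_ι, map_mul, map_smul, g_smul, g_ι,
        map_inv₀, Complex.conj_ofReal, fv, Matrix.cons_val_zero, Matrix.cons_val_one,
        Matrix.head_cons, Matrix.cons_val_two, Matrix.tail_cons, Matrix.cons_val_three]
      rw [mul_smul_comm, rab' q, smul_mul_assoc]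
      all_goals match_scalars <;> ring
  | bc =>
      simp only [star_mul, star_csmul, FreeAlgebra.star_ι, map_mul, map_smul, g_smul, g_ι,
        map_inv₀, Complex.conj_ofReal, fv, Matrix.cons_val_zero, Matrix.cons_val_one,
        Matrix.head_cons, Matrix.cons_val_two, Matrix.tail_cons, Matrix.cons_val_three,
        smul_mul_assoc, mul_smul_comm, smul_smul]
      rw [rbc' q]
      all_goals match_scalars <;> ring
  | ad =>
      simp only [star_sub, star_mul, star_csmul, FreeAlgebra.star_ι, map_mul, map_sub,
        map_smul, g_smul, g_ι, map_inv₀, Complex.conj_ofReal, fv, Matrix.cons_val_zero,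
        Matrix.cons_val_one, Matrix.head_cons, Matrix.cons_val_two, Matrix.tail_cons,
        Matrix.cons_val_three, smul_mul_assoc, mul_smul_comm, smul_smul]
      rw [rad' q]
      all_goals match_scalars <;> field_simp
  | det =>
      simp only [star_sub, star_one, star_mul, star_csmul, FreeAlgebra.star_ι, map_mul,
        map_sub, map_one, map_smul, g_smul, g_ι, map_inv₀, Complex.conj_ofReal, fv,
        Matrix.cons_val_zero, Matrix.cons_val_one, Matrix.head_cons, Matrix.cons_val_two,
        Matrix.tail_cons, Matrix.cons_val_three, smul_mul_assoc, mul_smul_comm, smul_smul]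
      rw [show ((q:ℂ))⁻¹ * ((q:ℂ) * ((q:ℂ))⁻¹) = ((q:ℂ))⁻¹ by field_simp]
      exact rdet' q

end SU11x

namespace SU11y
open SU11 SU11x

variable (q : ℝ) (hq : q ≠ 0)

def stq : SLq ((q : ℂ)) → SLq ((q : ℂ)) :=
  fun x => (RingQuot.lift ⟨Fop q, hrel q hq⟩ x).unop

lemma stq_mk (w : FreeAlgebra ℂ (Fin 4)) :
    stq q hq (RingQuot.mkAlgHom ℂ (SLRel ((q : ℂ))) w) = g q (star w) := by
  have h : RingQuot.mkAlgHom ℂ (SLRel ((q : ℂ))) w = RingQuot.mkRingHom (SLRel ((q : ℂ))) w :=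
    RingHom.congr_fun (RingQuot.mkAlgHom_coe ℂ (SLRel ((q : ℂ)))) w
  unfold stq
  rw [h, RingQuot.lift_mkRingHom_apply, Fop_apply, unop_op]

lemma stq_add (x y : SLq ((q : ℂ))) : stq q hq (x + y) = stq q hq x + stq q hq y := by
  unfold stq; rw [map_add, unop_add]

lemma stq_mul (x y : SLq ((q : ℂ))) : stq q hq (x * y) = stq q hq y * stq q hq x := by
  unfold stq; rw [map_mul, unop_mul]

lemma stq_one : stq q hq 1 = 1 := by
  unfold stq; rw [map_one, unop_one]

lemma stq_smul (z : ℂ) (x : SLq ((q : ℂ))) :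
    stq q hq (z • x) = (starRingEnd ℂ) z • stq q hq x := by
  rw [Algebra.smul_def, stq_mul]
  have ha : (algebraMap ℂ (SLq ((q : ℂ)))) z
      = RingQuot.mkAlgHom ℂ (SLRel ((q : ℂ))) (algebraMap ℂ _ z) :=
    ((RingQuot.mkAlgHom ℂ (SLRel ((q : ℂ)))).commutes z).symm
  rw [ha, stq_mk, star_algebraMap, g_alg, ← Algebra.commutes, ← Algebra.smul_def]

lemma stq_gen0 : stq q hq (gen ((q : ℂ)) 0) = gen ((q : ℂ)) 3 := by
  rw [gen, stq_mk, FreeAlgebra.star_ι, g_ι]; rfl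

lemma stq_gen1 : stq q hq (gen ((q : ℂ)) 1) = ((q : ℂ)) • gen ((q : ℂ)) 2 := by
  rw [gen, stq_mk, FreeAlgebra.star_ι, g_ι]
  show RingQuot.mkAlgHom ℂ (SLRel ((q : ℂ))) (((q : ℂ)) • ι ℂ 2) = _
  rw [map_smul]; rfl

lemma stq_gen2 : stq q hq (gen ((q : ℂ)) 2) = ((q : ℂ))⁻¹ • gen ((q : ℂ)) 1 := by
  rw [gen, stq_mk, FreeAlgebra.star_ι, g_ι]
  show RingQuot.mkAlgHom ℂ (SLRel ((q : ℂ))) ((((q : ℂ))⁻¹) • ι ℂ 1) = _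
  rw [map_smul]; rfl

lemma stq_gen3 : stq q hq (gen ((q : ℂ)) 3) = gen ((q : ℂ)) 0 := by
  rw [gen, stq_mk, FreeAlgebra.star_ι, g_ι]; rfl

lemma stq_invol (x : SLq ((q : ℂ))) : stq q hq (stq q hq x) = x := by
  have hQ : ((q : ℂ)) ≠ 0 := by exact_mod_cast hq
  obtain ⟨w, rfl⟩ := RingQuot.mkAlgHom_surjective ℂ (SLRel ((q : ℂ))) x
  induction w using FreeAlgebra.induction with
  | grade0 z =>
      have ha : RingQuot.mkAlgHom ℂ (SLRel ((q : ℂ))) (algebraMap ℂ _ z)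
          = z • (1 : SLq ((q : ℂ))) := by
        rw [AlgHom.commutes, Algebra.algebraMap_eq_smul_one]
      rw [ha, stq_smul, stq_one, stq_smul, stq_one, Complex.conj_conj]
  | grade1 i =>
      fin_cases i
      · show stq q hq (stq q hq (gen ((q:ℂ)) 0)) = gen ((q:ℂ)) 0
        rw [stq_gen0, stq_gen3]
      · show stq q hq (stq q hq (gen ((q:ℂ)) 1)) = gen ((q:ℂ)) 1
        rw [stq_gen1, stq_smul, stq_gen2, Complex.conj_ofReal, smul_smul,
          mul_inv_cancel₀ hQ, one_smul]
      · show stq q hq (stq q hq (gen ((q:ℂ)) 2)) = gen ((q:ℂ)) 2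
        rw [stq_gen2, stq_smul, stq_gen1, map_inv₀, Complex.conj_ofReal, smul_smul,
          inv_mul_cancel₀ hQ, one_smul]
      · show stq q hq (stq q hq (gen ((q:ℂ)) 3)) = gen ((q:ℂ)) 3
        rw [stq_gen3, stq_gen0]
  | mul a b ha hb => rw [map_mul, stq_mul, stq_mul, ha, hb]
  | add a b ha hb => rw [map_add, stq_add, stq_add, ha, hb]

end SU11y

namespace SU11z

lemma star_ext {q : ℂ} {s t : SLq q → SLq q}
    (hs : IsStar s ∧ StarVals q s) (ht : IsStar t ∧ StarVals q t) : s = t := by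
  obtain ⟨⟨hsadd, hssmul, hsmul, hsone, _⟩, hsv0, hsv1, hsv2, hsv3⟩ := hs
  obtain ⟨⟨htadd, htsmul, htmul, htone, _⟩, htv0, htv1, htv2, htv3⟩ := ht
  funext x
  obtain ⟨w, rfl⟩ := RingQuot.mkAlgHom_surjective ℂ (SLRel q) x
  induction w using FreeAlgebra.induction with
  | grade0 z =>
      have ha : RingQuot.mkAlgHom ℂ (SLRel q) (algebraMap ℂ _ z) = z • (1 : SLq q) := by
        rw [AlgHom.commutes, Algebra.algebraMap_eq_smul_one]
      rw [ha, hssmul, htsmul, hsone, htone]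
  | grade1 i =>
      fin_cases i
      · show s (gen q 0) = t (gen q 0); rw [hsv0, htv0]
      · show s (gen q 1) = t (gen q 1); rw [hsv1, htv1]
      · show s (gen q 2) = t (gen q 2); rw [hsv2, htv2]
      · show s (gen q 3) = t (gen q 3); rw [hsv3, htv3]
  | mul a b ha hb => rw [map_mul, hsmul, htmul, ha, hb]
  | add a b ha hb => rw [map_add, hsadd, htadd, ha, hb]

set_option maxHeartbeats 2000000 in
lemma hopf {q : ℂ} (hq : q ≠ 0) (st : SLq q → SLq q)
    (hst : IsStar st ∧ StarVals q st) (Δ : SLq q →ₐ[ℂ] (SLq q ⊗[ℂ] SLq q))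
    (hΔ : IsComul q Δ) :
    ∃ T : (SLq q ⊗[ℂ] SLq q) → (SLq q ⊗[ℂ] SLq q),
      (∀ u v, T (u + v) = T u + T v) ∧
      (∀ x y : SLq q, T (x ⊗ₜ[ℂ] y) = st x ⊗ₜ[ℂ] st y) ∧
      (∀ x : SLq q, Δ (st x) = T (Δ x)) := by
  obtain ⟨⟨hadd, hsmul, hmul, hone, _⟩, hv0, hv1, hv2, hv3⟩ := hst
  obtain ⟨hc0, hc1, hc2, hc3⟩ := hΔ
  have h0 : st 0 = 0 := by
    have := hsmul 0 0; simpa using this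
  set F : SLq q →+ SLq q →+ (SLq q ⊗[ℂ] SLq q) :=
    { toFun := fun x =>
        { toFun := fun y => st x ⊗ₜ[ℂ] st y
          map_zero' := by show st x ⊗ₜ[ℂ] st 0 = 0; rw [h0, TensorProduct.tmul_zero]
          map_add' := fun y y' => by
            show st x ⊗ₜ[ℂ] st (y + y') = st x ⊗ₜ[ℂ] st y + st x ⊗ₜ[ℂ] st y'
            rw [hadd, TensorProduct.tmul_add] }
      map_zero' := by
        ext y; show st 0 ⊗ₜ[ℂ] st y = 0; rw [h0, TensorProduct.zero_tmul]
      map_add' := fun x x' => by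
        ext y; show st (x + x') ⊗ₜ[ℂ] st y = st x ⊗ₜ[ℂ] st y + st x' ⊗ₜ[ℂ] st y
        rw [hadd, TensorProduct.add_tmul] } with hF
  have hbal : ∀ (r : ℂ) (m n : SLq q), F (r • m) n = F m (r • n) := by
    intro r m n
    show st (r • m) ⊗ₜ[ℂ] st n = st m ⊗ₜ[ℂ] st (r • n)
    rw [hsmul, hsmul]
    exact TensorProduct.smul_tmul _ _ _
  set T := TensorProduct.liftAddHom F hbal with hT
  have Ttmul : ∀ x y : SLq q, T (x ⊗ₜ[ℂ] y) = st x ⊗ₜ[ℂ] st y := fun x y =>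
    TensorProduct.liftAddHom_tmul F hbal x y
  have Tsmul : ∀ (z : ℂ) (u), T (z • u) = (starRingEnd ℂ) z • T u := by
    intro z u
    induction u using TensorProduct.induction_on with
    | zero => simp
    | tmul x y =>
        rw [TensorProduct.smul_tmul', Ttmul, Ttmul, hsmul, ← TensorProduct.smul_tmul']
    | add u v hu hv => rw [smul_add, map_add, map_add, hu, hv, smul_add]
  have Tmul : ∀ u v, T (u * v) = T v * T u := by
    intro u v
    induction u using TensorProduct.induction_on with
    | zero => simp
    | tmul x y =>
        induction v using TensorProduct.induction_on with
        | zero => simp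
        | tmul x' y' =>
            rw [Algebra.TensorProduct.tmul_mul_tmul, Ttmul, Ttmul, Ttmul, hmul, hmul,
              Algebra.TensorProduct.tmul_mul_tmul]
        | add u v hu hv => rw [mul_add, map_add, hu, hv, map_add, add_mul]
    | add u' v' hu hv => rw [add_mul, map_add, map_add, hu, hv, mul_add]
  refine ⟨T, fun u v => map_add T u v, Ttmul, ?_⟩
  intro x
  obtain ⟨w, rfl⟩ := RingQuot.mkAlgHom_surjective ℂ (SLRel q) x
  induction w using FreeAlgebra.induction with
  | grade0 z =>
      have ha : RingQuot.mkAlgHom ℂ (SLRel q) (algebraMap ℂ _ z) = z • (1 : SLq q) := by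
        rw [AlgHom.commutes, Algebra.algebraMap_eq_smul_one]
      have hT1 : T 1 = 1 := by
        rw [Algebra.TensorProduct.one_def, Ttmul, hone]
      rw [ha, hsmul, hone, map_smul, map_smul, map_one, Tsmul, hT1]
  | grade1 i =>
      fin_cases i
      · show Δ (st (gen q 0)) = T (Δ (gen q 0))
        rw [hv0, hc3, hc0, map_add, Ttmul, Ttmul, hv0, hv1, hv2,
          TensorProduct.smul_tmul, smul_smul, mul_inv_cancel₀ hq, one_smul, add_comm]
      · show Δ (st (gen q 1)) = T (Δ (gen q 1))
        rw [hv1, map_smul, hc2, hc1, map_add, Ttmul, Ttmul, hv0, hv1, hv3,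
          smul_add, TensorProduct.smul_tmul', ← TensorProduct.tmul_smul, add_comm]
      · show Δ (st (gen q 2)) = T (Δ (gen q 2))
        rw [hv2, map_smul, hc1, hc2, map_add, Ttmul, Ttmul, hv2, hv3, hv0,
          smul_add, ← TensorProduct.tmul_smul, TensorProduct.smul_tmul', add_comm]
      · show Δ (st (gen q 3)) = T (Δ (gen q 3))
        rw [hv3, hc0, hc3, map_add, Ttmul, Ttmul, hv3, hv2, hv1,
          TensorProduct.smul_tmul, smul_smul, inv_mul_cancel₀ hq, one_smul, add_comm]
  | mul a b ha hb =>
      rw [map_mul (RingQuot.mkAlgHom ℂ (SLRel q)) a b, hmul, map_mul Δ, ha, hb,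
        map_mul Δ, Tmul]
  | add a b ha hb =>
      rw [map_add (RingQuot.mkAlgHom ℂ (SLRel q)) a b, hadd, map_add Δ, ha, hb,
        map_add Δ, map_add T]

end SU11z

/-- For nonzero real `q` there is a unique star structure `★ₖ` on `SL_q(2,ℂ)` with
`a^★ = d`, `b^★ = q c`, `c^★ = q⁻¹ b`, `d^★ = a`, and it is a Hopf star structure:
`Δ(x^★) = (★ ⊗ ★)(Δ(x))` for all `x`.  (The real form `SU_q(1,1)`.) -/
theorem su11_star_exists_unique (q : ℝ) (hq : q ≠ 0) :
    (∃! st : SLq ((q : ℂ)) → SLq ((q : ℂ)), IsStar st ∧ StarVals ((q : ℂ)) st) ∧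
    (∀ st : SLq ((q : ℂ)) → SLq ((q : ℂ)), IsStar st ∧ StarVals ((q : ℂ)) st →
      ∀ Δ : SLq ((q : ℂ)) →ₐ[ℂ] (SLq ((q : ℂ)) ⊗[ℂ] SLq ((q : ℂ))), IsComul ((q : ℂ)) Δ →
        ∃ T : (SLq ((q : ℂ)) ⊗[ℂ] SLq ((q : ℂ))) → (SLq ((q : ℂ)) ⊗[ℂ] SLq ((q : ℂ))),
          (∀ u v : SLq ((q : ℂ)) ⊗[ℂ] SLq ((q : ℂ)), T (u + v) = T u + T v) ∧
          (∀ x y : SLq ((q : ℂ)), T (x ⊗ₜ[ℂ] y) = st x ⊗ₜ[ℂ] st y) ∧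
          (∀ x : SLq ((q : ℂ)), Δ (st x) = T (Δ x))) := by
  have hQ : ((q : ℂ)) ≠ 0 := by exact_mod_cast hq
  have hmain : IsStar (SU11y.stq q hq) ∧ StarVals ((q : ℂ)) (SU11y.stq q hq) :=
    ⟨⟨SU11y.stq_add q hq, SU11y.stq_smul q hq, SU11y.stq_mul q hq, SU11y.stq_one q hq,
      SU11y.stq_invol q hq⟩,
      SU11y.stq_gen0 q hq, SU11y.stq_gen1 q hq, SU11y.stq_gen2 q hq, SU11y.stq_gen3 q hq⟩
  exact ⟨⟨SU11y.stq q hq, hmain, fun st' h => SU11z.star_ext h hmain⟩,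
    fun st h Δ hΔ => SU11z.hopf hQ st h Δ hΔ⟩
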